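/- arXiv:1409.5677 — 4 statements merged into one kernel-verified Lean document; each statement's English description precedes it below -/
import Mathlib

section
/- Let B ∈ ℝ³, α ∈ ℝ, Δt ∈ ℝ, and v⁻ ∈ ℝ³. Define t := (α Δt / 2) · B, s := (2 / (1 + ‖t‖²)) · t, and v⁺ := v⁻ + (v⁻ + v⁻ × t) × s, where × denotes the cross product on ℝ³. Then v⁺ − v⁻ = (α Δt / 2) · ((v⁺ + v⁻) × B). In other words, the explicit Boris rotation formula solves the implicit rotation equation (v⁺ − v⁻)/Δt = (α/2)(v⁺ + v⁻) × B. -/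
/-- The cross product on `EuclideanSpace ℝ (Fin 3)`. -/
noncomputable def cross3 (a b : EuclideanSpace ℝ (Fin 3)) : EuclideanSpace ℝ (Fin 3) :=
  WithLp.toLp 2 (crossProduct (a : Fin 3 → ℝ) (b : Fin 3 → ℝ) : Fin 3 → ℝ)

/-!
With `c = 2 / (1 + |t|²)` and the triple product expansion `v × t × t = (v ⬝ t) t - |t|² v`,
both `v⁺ - v⁻ = c (v⁻ × t + v⁻ × t × t)` and `(v⁺ + v⁻) × t = (2 - c |t|²) v⁻ × t + c v⁻ × t × t`
are combinations of `v⁻ × t` and `v⁻ × t × t`, and they agree because `c (1 + |t|²) = 2`.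
This is an identity over any commutative ring; `(α Δt / 2) • (x × B) = x × t` reduces the
theorem to it.
-/

open Matrix WithLp

theorem boris_update_sub_eq_add_cross {R : Type*} [CommRing R] {v w t : Fin 3 → R} {c : R}
    (hc : c * (1 + t ⬝ᵥ t) = 2) (hw : w = v + (v + v ⨯₃ t) ⨯₃ (c • t)) :
    w - v = (w + v) ⨯₃ t := by
  subst hw
  simp only [map_add, map_sub, map_smul, LinearMap.add_apply, LinearMap.sub_apply,
    LinearMap.smul_apply, cross_cross_eq_smul_sub_smul, cross_self, smul_zero]
  linear_combination (norm := module) hc • (v ⨯₃ t)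

theorem EuclideanSpace.real_norm_sq_eq_dotProduct {ι : Type*} [Fintype ι]
    (x : EuclideanSpace ℝ ι) : ‖x‖ ^ 2 = ofLp x ⬝ᵥ ofLp x := by
  rw [← real_inner_self_eq_norm_sq, EuclideanSpace.inner_eq_star_dotProduct, star_trivial]

theorem cross3_smul_right (a b : EuclideanSpace ℝ (Fin 3)) (r : ℝ) :
    cross3 a (r • b) = r • cross3 a b :=
  ofLp_injective 2 (map_smul (crossProduct (ofLp a)) r (ofLp b))

/-- The explicit Boris rotation formula `v⁺ = v⁻ + (v⁻ + v⁻ × t) × s`, with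
`t = (α Δt / 2) • B` and `s = (2 / (1 + ‖t‖²)) • t`, solves the implicit rotation equation
`v⁺ − v⁻ = (α Δt / 2) • ((v⁺ + v⁻) × B)`. -/
theorem boris_explicit_rotation_solves_implicit
    (B vminus : EuclideanSpace ℝ (Fin 3)) (α Δt : ℝ)
    (t s vplus : EuclideanSpace ℝ (Fin 3))
    (ht : t = (α * Δt / 2) • B)
    (hs : s = (2 / (1 + ‖t‖ ^ 2)) • t)
    (hv : vplus = vminus + cross3 (vminus + cross3 vminus t) s) :
    vplus - vminus = (α * Δt / 2) • cross3 (vplus + vminus) B := by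
  have hc : 2 / (1 + ‖t‖ ^ 2) * (1 + ofLp t ⬝ᵥ ofLp t) = 2 := by
    rw [← EuclideanSpace.real_norm_sq_eq_dotProduct]
    field_simp
  subst hs
  rw [← cross3_smul_right, ← ht]
  exact ofLp_injective 2 (boris_update_sub_eq_add_cross hc (congrArg ofLp hv))
end

section
/- Let B ∈ ℝ³, c ∈ ℝ, and v⁺, v⁻ ∈ ℝ³. If v⁺ − v⁻ = c · ((v⁺ + v⁻) × B), then ‖v⁺‖ = ‖v⁻‖. That is, the implicit Boris rotation equation preserves the Euclidean norm of the velocity. -/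
theorem inner_self_cross3 (a b : EuclideanSpace ℝ (Fin 3)) : inner ℝ a (cross3 a b) = 0 := by
  rw [PiLp.inner_apply]
  simpa [dotProduct, cross3, mul_comm] using dot_self_cross (a : Fin 3 → ℝ) b

/-- The implicit Boris rotation equation `v⁺ − v⁻ = c • ((v⁺ + v⁻) × B)` preserves the
Euclidean norm of the velocity: `‖v⁺‖ = ‖v⁻‖`. -/
theorem boris_rotation_preserves_norm
    (B : EuclideanSpace ℝ (Fin 3)) (c : ℝ)
    (vplus vminus : EuclideanSpace ℝ (Fin 3))
    (h : vplus - vminus = c • cross3 (vplus + vminus) B) :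
    ‖vplus‖ = ‖vminus‖ := by
  rw [← real_inner_add_sub_eq_zero_iff, h, real_inner_smul_right, inner_self_cross3, mul_zero]
end

section
/- Let B, Ē, vₙ, v_{n+1} ∈ ℝ³, α ∈ ℝ, and Δt ∈ ℝ with Δt ≠ 0. Define v⁻ := vₙ + (α Δt / 2) · Ē and v⁺ := v_{n+1} − (α Δt / 2) · Ē. Then the implicit velocity-Verlet update equation (v_{n+1} − vₙ)/Δt = α · (Ē + ((v_{n+1} + vₙ)/2) × B) holds if and only if (v⁺ − v⁻)/Δt = (α/2) · ((v⁺ + v⁻) × B). That is, the substitution of v± separates the electric and magnetic forces and reduces the implicit velocity update to a pure rotation equation. -/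
lemma cross3_smul_left (c : ℝ) (a b : EuclideanSpace ℝ (Fin 3)) :
    cross3 (c • a) b = c • cross3 a b := by
  simp only [cross3, WithLp.ofLp_smul, map_smul, LinearMap.smul_apply, WithLp.toLp_smul]

lemma smul_sub_eq_smul_add_iff_of_half_shift {K V : Type*} [Field K] [NeZero (2 : K)]
    [AddCommGroup V] [Module K V] {a h : K} (hh : h ≠ 0) (x y e w : V) :
    h⁻¹ • (y - x) = a • (e + w) ↔
      h⁻¹ • ((y - (a * h / 2) • e) - (x + (a * h / 2) • e)) = a • w := by
  have hdiff :
      h⁻¹ • ((y - (a * h / 2) • e) - (x + (a * h / 2) • e)) = h⁻¹ • (y - x) - a • e := by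
    match_scalars <;> field_simp; ring
  rw [hdiff, sub_eq_iff_eq_add', smul_add]

/-- With `v⁻ := vₙ + (αΔt/2) Ē` and `v⁺ := v_{n+1} − (αΔt/2) Ē`, the implicit velocity-Verlet
update `(v_{n+1} − vₙ)/Δt = α (Ē + ((v_{n+1} + vₙ)/2) × B)` holds if and only if the pure
rotation equation `(v⁺ − v⁻)/Δt = (α/2) ((v⁺ + v⁻) × B)` holds. -/
theorem boris_substitution_separates_forces
    (B E vn vn1 : EuclideanSpace ℝ (Fin 3)) (α Δt : ℝ) (hΔt : Δt ≠ 0)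
    (vminus vplus : EuclideanSpace ℝ (Fin 3))
    (hvm : vminus = vn + (α * Δt / 2) • E)
    (hvp : vplus = vn1 - (α * Δt / 2) • E) :
    (Δt⁻¹ • (vn1 - vn) = α • (E + cross3 ((1 / 2 : ℝ) • (vn1 + vn)) B)) ↔
      (Δt⁻¹ • (vplus - vminus) = (α / 2) • cross3 (vplus + vminus) B) := by
  have hsum : vplus + vminus = vn1 + vn := by rw [hvp, hvm, sub_add_add_cancel]
  rw [hsum, hvp, hvm, smul_sub_eq_smul_add_iff_of_half_shift hΔt, cross3_smul_left, smul_smul,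
    mul_one_div]
end

section
/- Let d ≥ 1, f : ℝᵈ × ℝᵈ → ℝᵈ, x₀, v₀ ∈ ℝᵈ, and Δt > 0. Consider one sweep (k = 0 → 1) of the node-to-node SDC formulas on M = 2 Gauss-Lobatto nodes τ₀ = τ₁ = t_n, τ₂ = t_n + Δt, with matrices S = SQ-row (0, Δt/2, Δt/2), S_x-row (0, Δt²/2, 0), SQ-row (0, Δt²/4, Δt²/4) in their last rows and zeros elsewhere, Δτ₁ = 0, Δτ₂ = Δt, initialized by x_l⁰ = x₀ and v_l⁰ = v₀ for l = 0,1,2. Then the sweep produces x₁¹ = x₀, v₁¹ = v₀, x₂¹ = x₀ + Δt(v₀ + (Δt/2) f(x₀, v₀)), and the velocity update equation for v₂¹ is exactly the implicit velocity-Verlet equation v₂¹ = v₀ + (Δt/2)(f(x₀, v₀) + f(x₂¹, v₂¹)). Hence the first Boris-SDC iteration on two Gauss-Lobatto nodes coincides with one classical velocity-Verlet step. -/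
open scoped BigOperators

/-- One node-to-node SDC sweep (`k = 0 → 1`) on the `M = 2` Gauss-Lobatto nodes
`τ₀ = τ₁ = tₙ`, `τ₂ = tₙ + Δt`, with node-to-node matrices `S`, `S_x`, `SQ` whose only
nonzero rows are `(0, Δt/2, Δt/2)`, `(0, Δt²/2, 0)`, `(0, Δt²/4, Δt²/4)`, substeps
`Δτ₁ = 0`, `Δτ₂ = Δt`, and initial iterate `x⁰_l = x₀`, `v⁰_l = v₀`, produces
`x¹₁ = x₀`, `v¹₁ = v₀`, the velocity-Verlet position `x¹₂ = x₀ + Δt(v₀ + (Δt/2) f(x₀,v₀))`,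
and the implicit velocity-Verlet equation `v¹₂ = v₀ + (Δt/2)(f(x₀,v₀) + f(x¹₂,v¹₂))`:
the first Boris-SDC iteration coincides with one classical velocity-Verlet step. -/
theorem first_sdc_sweep_is_velocity_verlet
    (d : ℕ) (hd : 1 ≤ d)
    (f : (Fin d → ℝ) → (Fin d → ℝ) → (Fin d → ℝ))
    (x₀ v₀ : Fin d → ℝ) (Δt : ℝ) (hΔt : 0 < Δt)
    (Δτ : ℕ → ℝ) (hΔτ1 : Δτ 1 = 0) (hΔτ2 : Δτ 2 = Δt)
    (S Sx SQ : ℕ → ℕ → ℝ)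
    (hS : ∀ m l, S m l = if m = 2 ∧ (l = 1 ∨ l = 2) then Δt / 2 else 0)
    (hSx : ∀ m l, Sx m l = if m = 2 ∧ l = 1 then Δt ^ 2 / 2 else 0)
    (hSQ : ∀ m l, SQ m l = if m = 2 ∧ (l = 1 ∨ l = 2) then Δt ^ 2 / 4 else 0)
    (x v xn vn : ℕ → Fin d → ℝ)
    (hx : ∀ l ≤ 2, x l = x₀) (hv : ∀ l ≤ 2, v l = v₀)
    (hxn0 : xn 0 = x₀) (hvn0 : vn 0 = v₀)
    (hsweepv : ∀ m < 2, vn (m + 1) = vn m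
      + (Δτ (m + 1) / 2) • ((f (xn (m + 1)) (vn (m + 1)) - f (x (m + 1)) (v (m + 1)))
          + (f (xn m) (vn m) - f (x m) (v m)))
      + ∑ l ∈ Finset.Icc 1 2, S (m + 1) l • f (x l) (v l))
    (hsweepx : ∀ m < 2, xn (m + 1) = xn m + Δτ (m + 1) • v₀
      + (∑ l ∈ Finset.Icc 1 m, Sx (m + 1) l • (f (xn l) (vn l) - f (x l) (v l)))
      + ∑ l ∈ Finset.Icc 1 2, SQ (m + 1) l • f (x l) (v l)) :
    xn 1 = x₀ ∧ vn 1 = v₀ ∧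
    xn 2 = x₀ + Δt • (v₀ + (Δt / 2) • f x₀ v₀) ∧
    vn 2 = v₀ + (Δt / 2) • (f x₀ v₀ + f (xn 2) (vn 2)) := by
  have h1v := hsweepv 0 (by norm_num)
  have h1x := hsweepx 0 (by norm_num)
  simp only [hx _ (by norm_num : (0:ℕ) ≤ 2), hx _ (by norm_num : (1:ℕ) ≤ 2),
    hx _ (by norm_num : (2:ℕ) ≤ 2), hv _ (by norm_num : (0:ℕ) ≤ 2),
    hv _ (by norm_num : (1:ℕ) ≤ 2), hv _ (by norm_num : (2:ℕ) ≤ 2)] at h1v h1x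
  rw [show Finset.Icc 1 2 = {1, 2} from rfl] at h1v h1x
  simp [hS, hSx, hSQ, hΔτ1, hxn0, hvn0] at h1v h1x
  have h2v := hsweepv 1 (by norm_num)
  have h2x := hsweepx 1 (by norm_num)
  simp only [hx _ (by norm_num : (1:ℕ) ≤ 2), hx _ (by norm_num : (2:ℕ) ≤ 2),
    hv _ (by norm_num : (1:ℕ) ≤ 2), hv _ (by norm_num : (2:ℕ) ≤ 2)] at h2v h2x
  rw [show Finset.Icc 1 2 = {1, 2} from rfl] at h2v h2x
  rw [show Finset.Icc 1 1 = {1} from rfl] at h2x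
  simp [hS, hSx, hSQ, hΔτ2, h1x, h1v] at h2v h2x
  rw [hx 1 (by norm_num), hx 2 (by norm_num), hv 1 (by norm_num), hv 2 (by norm_num)] at h2v h2x
  refine ⟨h1x, h1v, ?_, ?_⟩
  · rw [h2x]; module
  · set a := f (xn 2) (vn 2) with ha
    rw [h2v]; module
end
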